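/- arXiv:1209.5714 — 6 statements merged into one kernel-verified Lean document; each statement's English description precedes it below -/
import Mathlib

section
/- Let (X, μ) be a measure space, let s : ℝ × X → ℝ be measurable, and let e_K, e_P : ℝ × X → ℝ be such that for each t ∈ ℝ the functions e_K(t,·) and e_P(t,·) are nonnegative, measurable and integrable with respect to μ. Suppose F ∈ L²(ℝ) satisfies: (1) for every λ ∈ ℝ, lim_{T→∞} ∫_{{x : s(T,x) ≤ λ}} e_K(T,x) dμ(x) = lim_{T→∞} ∫_{{x : s(T,x) ≤ λ}} e_P(T,x) dμ(x) = (1/2)∫_{(-∞,λ]} |F(σ)|² dσ; and (2) for every t ∈ ℝ, ∫_X (e_K(t,x) + e_P(t,x)) dμ(x) = ∫_ℝ |F(σ)|² dσ. Then lim_{T→∞} ( ∫_X e_K(T,x) dμ(x) − ∫_X e_P(T,x) dμ(x) ) = 0. -/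
/-!
The total energy `E_K(T) + E_P(T) = ‖F‖²` is constant. Each of `E_K(T)`, `E_P(T)` dominates
its part in `{s(T,·) ≤ λ}`, whose limit `½ ∫_{(-∞,λ]} |F|²` tends to `½ ‖F‖²` as `λ → ∞`;
so both energies are eventually above any number below `½ ‖F‖²`. Since they sum to `‖F‖²`,
each is then also eventually below any number above `½ ‖F‖²`, i.e. both tend to `½ ‖F‖²`.
-/

open MeasureTheory Filter Topology Set

section Order

variable {α ι β : Type*} [LinearOrder β] [TopologicalSpace β] [ClosedIicTopology β]

theorem eventually_gt_of_forall_le_of_tendsto {l : Filter α} {l' : Filter ι} [l'.NeBot]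
    {f : α → β} {g : ι → α → β} {L : ι → β} {M : β}
    (hg : ∀ i, Tendsto (g i) l (𝓝 (L i))) (hle : ∀ i a, g i a ≤ f a)
    (hL : Tendsto L l' (𝓝 M)) {y : β} (hy : y < M) : ∀ᶠ a in l, y < f a := by
  obtain ⟨i, hi⟩ := (hL.eventually (eventually_gt_nhds hy)).exists
  filter_upwards [(hg i).eventually (eventually_gt_nhds hi)] with a ha
  exact ha.trans_le (hle i a)

end Order

theorem tendsto_of_add_eq_of_eventually_gt {α : Type*} {l : Filter α} {f g : α → ℝ} {m : ℝ}
    (hsum : ∀ a, f a + g a = 2 * m)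
    (hf : ∀ y < m, ∀ᶠ a in l, y < f a) (hg : ∀ y < m, ∀ᶠ a in l, y < g a) :
    Tendsto f l (𝓝 m) := by
  refine tendsto_order.2 ⟨hf, fun y hy => ?_⟩
  filter_upwards [hg (2 * m - y) (by linarith)] with a ha
  linarith [hsum a]

theorem tendsto_setIntegral_Iic_atTop {E : Type*} [NormedAddCommGroup E] [NormedSpace ℝ E]
    {μ : Measure ℝ} {f : ℝ → E} (hf : Integrable f μ) :
    Tendsto (fun b => ∫ x in Iic b, f x ∂μ) atTop (𝓝 (∫ x, f x ∂μ)) :=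
  (aecover_Iic tendsto_id).integral_tendsto_of_countably_generated hf

theorem equipartition_of_energy_general
    {X : Type*} [MeasurableSpace X] (μ : Measure X)
    (s eK eP : ℝ × X → ℝ) (F : ℝ → ℝ)
    (heKnonneg : ∀ t : ℝ, ∀ x : X, 0 ≤ eK (t, x))
    (hePnonneg : ∀ t : ℝ, ∀ x : X, 0 ≤ eP (t, x))
    (heKint : ∀ t : ℝ, Integrable (fun x => eK (t, x)) μ)
    (hePint : ∀ t : ℝ, Integrable (fun x => eP (t, x)) μ)
    (hF : MemLp F 2 (volume : Measure ℝ))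
    (hcond1K : ∀ lam : ℝ,
      Tendsto (fun T => ∫ x in {x | s (T, x) ≤ lam}, eK (T, x) ∂μ) atTop
        (𝓝 ((1 / 2) * ∫ σ in Set.Iic lam, |F σ| ^ 2)))
    (hcond1P : ∀ lam : ℝ,
      Tendsto (fun T => ∫ x in {x | s (T, x) ≤ lam}, eP (T, x) ∂μ) atTop
        (𝓝 ((1 / 2) * ∫ σ in Set.Iic lam, |F σ| ^ 2)))
    (hcond2 : ∀ t : ℝ, ∫ x, (eK (t, x) + eP (t, x)) ∂μ = ∫ σ : ℝ, |F σ| ^ 2) :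
    Tendsto (fun T => (∫ x, eK (T, x) ∂μ) - ∫ x, eP (T, x) ∂μ) atTop (𝓝 0) := by
  set m := (1 / 2) * ∫ σ : ℝ, |F σ| ^ 2
  have hsq : Integrable (fun σ => |F σ| ^ 2) volume := by
    simpa only [sq_abs] using hF.integrable_sq
  have hmass : Tendsto (fun lam => (1 / 2) * ∫ σ in Iic lam, |F σ| ^ 2) atTop (𝓝 m) :=
    (tendsto_setIntegral_Iic_atTop hsq).const_mul _
  have htotal : ∀ T, (∫ x, eK (T, x) ∂μ) + ∫ x, eP (T, x) ∂μ = 2 * m := fun T => by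
    rw [← integral_add (heKint T) (hePint T), hcond2 T]
    ring
  have hK_low : ∀ y < m, ∀ᶠ T in atTop, y < ∫ x, eK (T, x) ∂μ := fun _ =>
    eventually_gt_of_forall_le_of_tendsto hcond1K
      (fun _ T => setIntegral_le_integral (heKint T) (ae_of_all _ (heKnonneg T))) hmass
  have hP_low : ∀ y < m, ∀ᶠ T in atTop, y < ∫ x, eP (T, x) ∂μ := fun _ =>
    eventually_gt_of_forall_le_of_tendsto hcond1P
      (fun _ T => setIntegral_le_integral (hePint T) (ae_of_all _ (hePnonneg T))) hmass
  have hK := tendsto_of_add_eq_of_eventually_gt htotal hK_low hP_low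
  have hP := tendsto_of_add_eq_of_eventually_gt
    (fun T => (add_comm _ _).trans (htotal T)) hP_low hK_low
  simpa only [sub_self] using hK.sub hP

/-- Proposition 3.1 (abstract asymptotic equipartition of energy): if the kinetic and
potential energies in the regions `{s(T,·) ≤ λ}` both converge, as `T → ∞`, to half the
mass of `|F|²` on `(-∞, λ]`, and the total energy at each time equals `‖F‖_{L²}²`, then
the total kinetic and potential energies asymptotically agree. -/
theorem equipartition_of_energy
    {X : Type*} [MeasurableSpace X] (μ : Measure X)
    (s eK eP : ℝ × X → ℝ) (F : ℝ → ℝ)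
    (hs : Measurable s)
    (heKmeas : ∀ t : ℝ, Measurable fun x => eK (t, x))
    (hePmeas : ∀ t : ℝ, Measurable fun x => eP (t, x))
    (heKnonneg : ∀ t : ℝ, ∀ x : X, 0 ≤ eK (t, x))
    (hePnonneg : ∀ t : ℝ, ∀ x : X, 0 ≤ eP (t, x))
    (heKint : ∀ t : ℝ, Integrable (fun x => eK (t, x)) μ)
    (hePint : ∀ t : ℝ, Integrable (fun x => eP (t, x)) μ)
    (hF : MemLp F 2 (volume : Measure ℝ))
    (hcond1K : ∀ lam : ℝ,
      Tendsto (fun T => ∫ x in {x | s (T, x) ≤ lam}, eK (T, x) ∂μ) atTop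
        (𝓝 ((1 / 2) * ∫ σ in Set.Iic lam, |F σ| ^ 2)))
    (hcond1P : ∀ lam : ℝ,
      Tendsto (fun T => ∫ x in {x | s (T, x) ≤ lam}, eP (T, x) ∂μ) atTop
        (𝓝 ((1 / 2) * ∫ σ in Set.Iic lam, |F σ| ^ 2)))
    (hcond2 : ∀ t : ℝ, ∫ x, (eK (t, x) + eP (t, x)) ∂μ = ∫ σ : ℝ, |F σ| ^ 2) :
    Tendsto (fun T => (∫ x, eK (T, x) ∂μ) - ∫ x, eP (T, x) ∂μ) atTop (𝓝 0) :=
  equipartition_of_energy_general μ s eK eP F heKnonneg hePnonneg heKint hePint hF hcond1K hcond1P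
    hcond2
end

section
/- Let (X, μ) be a measure space, let s : ℝ × X → ℝ be measurable, and let e_K, e_P : ℝ × X → ℝ be such that for each t ∈ ℝ the functions e_K(t,·) and e_P(t,·) are nonnegative, measurable and integrable with respect to μ. Suppose F ∈ L²(ℝ) satisfies: (1) for every λ ∈ ℝ, lim_{T→∞} ∫_{{x : s(T,x) ≤ λ}} e_K(T,x) dμ(x) = lim_{T→∞} ∫_{{x : s(T,x) ≤ λ}} e_P(T,x) dμ(x) = (1/2)∫_{(-∞,λ]} |F(σ)|² dσ; and (2) for every t ∈ ℝ, ∫_X (e_K(t,x) + e_P(t,x)) dμ(x) = ∫_ℝ |F(σ)|² dσ. Then lim_{T→∞} ∫_X e_K(T,x) dμ(x) = lim_{T→∞} ∫_X e_P(T,x) dμ(x) = (1/2)∫_ℝ |F(σ)|² dσ. -/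
/-!
The energy in a region `{s(T,·) ≤ λ}` is a lower bound for the total energy of each kind, so
in the limit both total energies are at least `½ ∫_{(-∞,λ]} |F|²`, which is as close to
`½ ‖F‖²` as we like for `λ` large. Since the two total energies sum to `‖F‖²`, the lower
bound for one of them is also an upper bound for the other.
-/

open MeasureTheory Filter Topology

theorem eventually_lt_of_tendsto_of_le {ι α β : Type*} [LinearOrder β] [TopologicalSpace β]
    [OrderTopology β] {l' : Filter ι} [l'.NeBot] {l : Filter α} {a : ι → α → β} {L : ι → β}
    {A : α → β} {M : β} (hL : Tendsto L l' (𝓝 M)) (ha : ∀ i, Tendsto (a i) l (𝓝 (L i)))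
    (hle : ∀ i t, a i t ≤ A t) : ∀ c < M, ∀ᶠ t in l, c < A t := by
  intro c hc
  obtain ⟨i, hi⟩ := (hL.eventually (lt_mem_nhds hc)).exists
  exact ((ha i).eventually (lt_mem_nhds hi)).mono fun t ht => ht.trans_le (hle i t)

theorem tendsto_of_add_eq_two_mul {α : Type*} {l : Filter α} {A B : α → ℝ} {M : ℝ}
    (hsum : ∀ t, A t + B t = 2 * M) (hA : ∀ c < M, ∀ᶠ t in l, c < A t)
    (hB : ∀ c < M, ∀ᶠ t in l, c < B t) : Tendsto A l (𝓝 M) := by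
  refine tendsto_order.2 ⟨hA, fun c hc => ?_⟩
  filter_upwards [hB (2 * M - c) (by linarith)] with t ht
  linarith [hsum t]

theorem total_energies_tendsto_half_general
    {X : Type*} [MeasurableSpace X] (μ : Measure X)
    (s eK eP : ℝ × X → ℝ) (F : ℝ → ℝ)
    (heKnonneg : ∀ t : ℝ, ∀ x : X, 0 ≤ eK (t, x))
    (hePnonneg : ∀ t : ℝ, ∀ x : X, 0 ≤ eP (t, x))
    (heKint : ∀ t : ℝ, Integrable (fun x => eK (t, x)) μ)
    (hePint : ∀ t : ℝ, Integrable (fun x => eP (t, x)) μ)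
    (hF : MemLp F 2 (volume : Measure ℝ))
    (hcond1K : ∀ lam : ℝ,
      Tendsto (fun T => ∫ x in {x | s (T, x) ≤ lam}, eK (T, x) ∂μ) atTop
        (𝓝 ((1 / 2) * ∫ σ in Set.Iic lam, |F σ| ^ 2)))
    (hcond1P : ∀ lam : ℝ,
      Tendsto (fun T => ∫ x in {x | s (T, x) ≤ lam}, eP (T, x) ∂μ) atTop
        (𝓝 ((1 / 2) * ∫ σ in Set.Iic lam, |F σ| ^ 2)))
    (hcond2 : ∀ t : ℝ, ∫ x, (eK (t, x) + eP (t, x)) ∂μ = ∫ σ : ℝ, |F σ| ^ 2) :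
    Tendsto (fun T => ∫ x, eK (T, x) ∂μ) atTop (𝓝 ((1 / 2) * ∫ σ : ℝ, |F σ| ^ 2)) ∧
    Tendsto (fun T => ∫ x, eP (T, x) ∂μ) atTop (𝓝 ((1 / 2) * ∫ σ : ℝ, |F σ| ^ 2)) := by
  have hF2 : Integrable (fun σ => |F σ| ^ 2) := by simpa only [sq_abs] using hF.integrable_sq
  have hL : Tendsto (fun lam => (1 / 2) * ∫ σ in Set.Iic lam, |F σ| ^ 2) atTop
      (𝓝 ((1 / 2) * ∫ σ, |F σ| ^ 2)) :=
    ((aecover_Iic tendsto_id).integral_tendsto_of_countably_generated hF2).const_mul _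
  have hsum (t : ℝ) :
      ∫ x, eK (t, x) ∂μ + ∫ x, eP (t, x) ∂μ = 2 * ((1 / 2) * ∫ σ, |F σ| ^ 2) := by
    rw [← integral_add (heKint t) (hePint t), hcond2]
    ring
  have hK := eventually_lt_of_tendsto_of_le hL hcond1K
    (A := fun T => ∫ x, eK (T, x) ∂μ)
    fun _ T => setIntegral_le_integral (heKint T) (.of_forall (heKnonneg T))
  have hP := eventually_lt_of_tendsto_of_le hL hcond1P
    (A := fun T => ∫ x, eP (T, x) ∂μ)
    fun _ T => setIntegral_le_integral (hePint T) (.of_forall (hePnonneg T))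
  exact ⟨tendsto_of_add_eq_two_mul hsum hK hP,
    tendsto_of_add_eq_two_mul (fun t => (add_comm _ _).trans (hsum t)) hP hK⟩

/-- Proposition 3.1 (abstract asymptotic equipartition of energy): if the kinetic and
potential energies in the regions `{s(T,·) ≤ λ}` both converge, as `T → ∞`, to half the
mass of `|F|²` on `(-∞, λ]`, and the total energy at each time equals `‖F‖_{L²}²`, then
the total kinetic and potential energies asymptotically agree. -/
theorem total_energies_tendsto_half
    {X : Type*} [MeasurableSpace X] (μ : Measure X)
    (s eK eP : ℝ × X → ℝ) (F : ℝ → ℝ)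
    (hs : Measurable s)
    (heKmeas : ∀ t : ℝ, Measurable fun x => eK (t, x))
    (hePmeas : ∀ t : ℝ, Measurable fun x => eP (t, x))
    (heKnonneg : ∀ t : ℝ, ∀ x : X, 0 ≤ eK (t, x))
    (hePnonneg : ∀ t : ℝ, ∀ x : X, 0 ≤ eP (t, x))
    (heKint : ∀ t : ℝ, Integrable (fun x => eK (t, x)) μ)
    (hePint : ∀ t : ℝ, Integrable (fun x => eP (t, x)) μ)
    (hF : MemLp F 2 (volume : Measure ℝ))
    (hcond1K : ∀ lam : ℝ,
      Tendsto (fun T => ∫ x in {x | s (T, x) ≤ lam}, eK (T, x) ∂μ) atTop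
        (𝓝 ((1 / 2) * ∫ σ in Set.Iic lam, |F σ| ^ 2)))
    (hcond1P : ∀ lam : ℝ,
      Tendsto (fun T => ∫ x in {x | s (T, x) ≤ lam}, eP (T, x) ∂μ) atTop
        (𝓝 ((1 / 2) * ∫ σ in Set.Iic lam, |F σ| ^ 2)))
    (hcond2 : ∀ t : ℝ, ∫ x, (eK (t, x) + eP (t, x)) ∂μ = ∫ σ : ℝ, |F σ| ^ 2) :
    Tendsto (fun T => ∫ x, eK (T, x) ∂μ) atTop (𝓝 ((1 / 2) * ∫ σ : ℝ, |F σ| ^ 2)) ∧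
    Tendsto (fun T => ∫ x, eP (T, x) ∂μ) atTop (𝓝 ((1 / 2) * ∫ σ : ℝ, |F σ| ^ 2)) :=
  total_energies_tendsto_half_general μ s eK eP F heKnonneg hePnonneg heKint hePint hF hcond1K
    hcond1P hcond2
end

section
/- Let (X, μ) be a measure space, let s : ℝ × X → ℝ be measurable, and let e_K, e_P : ℝ × X → ℝ be such that for each t ∈ ℝ the functions e_K(t,·) and e_P(t,·) are nonnegative, measurable and integrable with respect to μ. Suppose F ∈ L²(ℝ) satisfies: (1) for every λ ∈ ℝ, lim_{T→∞} ∫_{{x : s(T,x) ≤ λ}} e_K(T,x) dμ(x) = lim_{T→∞} ∫_{{x : s(T,x) ≤ λ}} e_P(T,x) dμ(x) = (1/2)∫_{(-∞,λ]} |F(σ)|² dσ; and (2) for every t ∈ ℝ, ∫_X (e_K(t,x) + e_P(t,x)) dμ(x) = ∫_ℝ |F(σ)|² dσ. Then for every ε > 0 there exist λ ∈ ℝ and T₀ ∈ ℝ such that for all T ≥ T₀, ∫_{{x : s(T,x) > λ}} (e_K(T,x) + e_P(T,x)) dμ(x) ≤ ε. -/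
/-!
The energy outside `{s(T,·) ≤ λ}` is the total energy `‖F‖²` minus the energy inside, and by
hypothesis the latter tends to `∫_{(-∞,λ]} |F|²` as `T → ∞`. Choosing `λ` so large that this
truncated mass is within `ε` of `‖F‖²` leaves an outside energy below `ε` for all large `T`.
-/

open MeasureTheory Filter Topology

theorem exists_eventually_sub_lt_of_tendsto {ι κ : Type*} {l : Filter ι} [l.NeBot]
    {l' : Filter κ} {u : ι → κ → ℝ} {v : ι → ℝ} {M ε : ℝ}
    (hu : ∀ i, Tendsto (u i) l' (𝓝 (v i))) (hv : Tendsto v l (𝓝 M)) (hε : 0 < ε) :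
    ∃ i, ∀ᶠ k in l', M - u i k < ε := by
  obtain ⟨i, hi⟩ := (hv.eventually (eventually_gt_nhds (sub_lt_self M hε))).exists
  exact ⟨i, ((hu i).eventually (eventually_gt_nhds hi)).mono fun k hk => by linarith⟩

theorem setIntegral_lt_add_eq_integral_sub {X : Type*} [MeasurableSpace X] {μ : Measure X}
    {g f₁ f₂ : X → ℝ} (hg : Measurable g) (hf₁ : Integrable f₁ μ) (hf₂ : Integrable f₂ μ)
    (lam : ℝ) :
    ∫ x in {x | lam < g x}, (f₁ x + f₂ x) ∂μ =
      ∫ x, (f₁ x + f₂ x) ∂μ -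
        ((∫ x in {x | g x ≤ lam}, f₁ x ∂μ) + ∫ x in {x | g x ≤ lam}, f₂ x ∂μ) := by
  have hcompl : {x | lam < g x} = {x | g x ≤ lam}ᶜ := by
    ext x; simp
  have hmeas : MeasurableSet {x | g x ≤ lam} := measurableSet_le hg measurable_const
  rw [hcompl, setIntegral_compl (f := fun x => f₁ x + f₂ x) hmeas (hf₁.add hf₂),
    integral_add hf₁.integrableOn hf₂.integrableOn]

theorem local_energy_decay_general
    {X : Type*} [MeasurableSpace X] (μ : Measure X)
    (s eK eP : ℝ × X → ℝ) (F : ℝ → ℝ)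
    (hs : Measurable s)
    (heKint : ∀ t : ℝ, Integrable (fun x => eK (t, x)) μ)
    (hePint : ∀ t : ℝ, Integrable (fun x => eP (t, x)) μ)
    (hF : MemLp F 2 (volume : Measure ℝ))
    (hcond1K : ∀ lam : ℝ,
      Tendsto (fun T => ∫ x in {x | s (T, x) ≤ lam}, eK (T, x) ∂μ) atTop
        (𝓝 ((1 / 2) * ∫ σ in Set.Iic lam, |F σ| ^ 2)))
    (hcond1P : ∀ lam : ℝ,
      Tendsto (fun T => ∫ x in {x | s (T, x) ≤ lam}, eP (T, x) ∂μ) atTop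
        (𝓝 ((1 / 2) * ∫ σ in Set.Iic lam, |F σ| ^ 2)))
    (hcond2 : ∀ t : ℝ, ∫ x, (eK (t, x) + eP (t, x)) ∂μ = ∫ σ : ℝ, |F σ| ^ 2) :
    ∀ ε > (0 : ℝ), ∃ lam T₀ : ℝ, ∀ T ≥ T₀,
      (∫ x in {x | lam < s (T, x)}, (eK (T, x) + eP (T, x)) ∂μ) ≤ ε := by
  intro ε hε
  have hmass : Tendsto (fun lam => ∫ σ in Set.Iic lam, |F σ| ^ 2) atTop
      (𝓝 (∫ σ, |F σ| ^ 2)) :=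
    (aecover_Iic tendsto_id).integral_tendsto_of_countably_generated
      (by simpa only [sq_abs] using hF.integrable_sq)
  have hinside (lam : ℝ) : Tendsto (fun T => (∫ x in {x | s (T, x) ≤ lam}, eK (T, x) ∂μ) +
      ∫ x in {x | s (T, x) ≤ lam}, eP (T, x) ∂μ) atTop (𝓝 (∫ σ in Set.Iic lam, |F σ| ^ 2)) := by
    simpa only [← add_mul, add_halves, one_mul] using (hcond1K lam).add (hcond1P lam)
  obtain ⟨lam, hlam⟩ := exists_eventually_sub_lt_of_tendsto hinside hmass hε
  obtain ⟨T₀, hT₀⟩ := hlam.exists_forall_of_atTop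
  refine ⟨lam, T₀, fun T hT => ?_⟩
  have hsT : Measurable fun x => s (T, x) := hs.comp measurable_prodMk_left
  rw [setIntegral_lt_add_eq_integral_sub hsT (heKint T) (hePint T), hcond2 T]
  exact (hT₀ T hT).le

/-- Proposition 3.1 (abstract asymptotic equipartition of energy): if the kinetic and
potential energies in the regions `{s(T,·) ≤ λ}` both converge, as `T → ∞`, to half the
mass of `|F|²` on `(-∞, λ]`, and the total energy at each time equals `‖F‖_{L²}²`, then
the total kinetic and potential energies asymptotically agree. -/
theorem local_energy_decay
    {X : Type*} [MeasurableSpace X] (μ : Measure X)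
    (s eK eP : ℝ × X → ℝ) (F : ℝ → ℝ)
    (hs : Measurable s)
    (heKmeas : ∀ t : ℝ, Measurable fun x => eK (t, x))
    (hePmeas : ∀ t : ℝ, Measurable fun x => eP (t, x))
    (heKnonneg : ∀ t : ℝ, ∀ x : X, 0 ≤ eK (t, x))
    (hePnonneg : ∀ t : ℝ, ∀ x : X, 0 ≤ eP (t, x))
    (heKint : ∀ t : ℝ, Integrable (fun x => eK (t, x)) μ)
    (hePint : ∀ t : ℝ, Integrable (fun x => eP (t, x)) μ)
    (hF : MemLp F 2 (volume : Measure ℝ))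
    (hcond1K : ∀ lam : ℝ,
      Tendsto (fun T => ∫ x in {x | s (T, x) ≤ lam}, eK (T, x) ∂μ) atTop
        (𝓝 ((1 / 2) * ∫ σ in Set.Iic lam, |F σ| ^ 2)))
    (hcond1P : ∀ lam : ℝ,
      Tendsto (fun T => ∫ x in {x | s (T, x) ≤ lam}, eP (T, x) ∂μ) atTop
        (𝓝 ((1 / 2) * ∫ σ in Set.Iic lam, |F σ| ^ 2)))
    (hcond2 : ∀ t : ℝ, ∫ x, (eK (t, x) + eP (t, x)) ∂μ = ∫ σ : ℝ, |F σ| ^ 2) :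
    ∀ ε > (0 : ℝ), ∃ lam T₀ : ℝ, ∀ T ≥ T₀,
      (∫ x in {x | lam < s (T, x)}, (eK (T, x) + eP (T, x)) ∂μ) ≤ ε :=
  local_energy_decay_general μ s eK eP F hs heKint hePint hF hcond1K hcond1P hcond2
end

section
/- Let φ, ψ : ℝ → ℝ be smooth and compactly supported, and let u(t,x) = F(x+t) + G(x−t) where F(σ) = φ(σ)/2 + (1/2)∫_0^σ ψ(r) dr and G(σ) = φ(σ)/2 − (1/2)∫_0^σ ψ(r) dr. Then for every s ∈ ℝ: lim_{r→∞} (∂_t u)(s + r, −r) = F'(s) = (φ'(s) + ψ(s))/2, and lim_{r→∞} (∂_t u)(s + r, r) = −G'(−s) = −(φ'(−s) − ψ(−s))/2. -/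
open MeasureTheory Filter Topology intervalIntegral

/-- The forward radiation field of the one-dimensional wave equation: for compactly
supported smooth data `(φ, ψ)` and the d'Alembert solution `u(t,x) = F(x+t) + G(x-t)`,
the limits of `∂ₜu(s + r, ∓r)` as `r → ∞` are `F'(s)` and `-G'(-s)` respectively. -/
theorem radiation_field_one_dim
    (φ ψ : ℝ → ℝ) (hφ : ContDiff ℝ (⊤ : ℕ∞) φ) (hψ : ContDiff ℝ (⊤ : ℕ∞) ψ)
    (hφc : HasCompactSupport φ) (hψc : HasCompactSupport ψ)
    (F G : ℝ → ℝ) (u : ℝ → ℝ → ℝ)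
    (hF : ∀ σ : ℝ, F σ = φ σ / 2 + (1 / 2) * ∫ r in (0 : ℝ)..σ, ψ r)
    (hG : ∀ σ : ℝ, G σ = φ σ / 2 - (1 / 2) * ∫ r in (0 : ℝ)..σ, ψ r)
    (hu : ∀ t x : ℝ, u t x = F (x + t) + G (x - t)) :
    ∀ s : ℝ,
      (Tendsto (fun r : ℝ => deriv (fun τ => u τ (-r)) (s + r)) atTop (𝓝 (deriv F s)) ∧
        deriv F s = (deriv φ s + ψ s) / 2) ∧
      (Tendsto (fun r : ℝ => deriv (fun τ => u τ r) (s + r)) atTop (𝓝 (-deriv G (-s))) ∧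
        -deriv G (-s) = -((deriv φ (-s) - ψ (-s)) / 2)) := by
  have hφd : Differentiable ℝ φ := hφ.differentiable (by simp)
  have hFd : ∀ σ : ℝ, HasDerivAt F ((deriv φ σ + ψ σ) / 2) σ := by
    intro σ
    have h1 : HasDerivAt φ (deriv φ σ) σ := (hφd σ).hasDerivAt
    have h2 : HasDerivAt (fun v => ∫ r in (0 : ℝ)..v, ψ r) (ψ σ) σ :=
      (hψ.continuous.integral_hasStrictDerivAt 0 σ).hasDerivAt
    have h3 := (h1.div_const 2).add (h2.const_mul (1 / 2 : ℝ))
    simp only [Pi.add_def] at h3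
    have hfun : F = fun v => φ v / 2 + (1 / 2) * ∫ r in (0 : ℝ)..v, ψ r := funext hF
    rw [hfun]
    exact h3.congr_deriv (by ring)
  have hGd : ∀ σ : ℝ, HasDerivAt G ((deriv φ σ - ψ σ) / 2) σ := by
    intro σ
    have h1 : HasDerivAt φ (deriv φ σ) σ := (hφd σ).hasDerivAt
    have h2 : HasDerivAt (fun v => ∫ r in (0 : ℝ)..v, ψ r) (ψ σ) σ :=
      (hψ.continuous.integral_hasStrictDerivAt 0 σ).hasDerivAt
    have h3 := (h1.div_const 2).sub (h2.const_mul (1 / 2 : ℝ))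
    simp only [Pi.sub_def] at h3
    have hfun : G = fun v => φ v / 2 - (1 / 2) * ∫ r in (0 : ℝ)..v, ψ r := funext hG
    rw [hfun]
    exact h3.congr_deriv (by ring)
  -- support bound
  obtain ⟨R, hR0, hR⟩ :
      ∃ R : ℝ, 0 ≤ R ∧ ∀ x : ℝ, R < |x| → deriv φ x = 0 ∧ ψ x = 0 := by
    have hK : IsCompact (tsupport (deriv φ) ∪ tsupport ψ) :=
      (hφc.deriv).union hψc
    obtain ⟨R, hRb⟩ := hK.isBounded.subset_closedBall 0
    refine ⟨max R 0, le_max_right _ _, fun x hx => ?_⟩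
    have hxK : x ∉ tsupport (deriv φ) ∪ tsupport ψ := by
      intro hmem
      have := hRb hmem
      rw [Metric.mem_closedBall, Real.dist_eq, sub_zero] at this
      have := le_max_left R 0
      linarith
    exact ⟨image_eq_zero_of_notMem_tsupport (fun h => hxK (Or.inl h)),
      image_eq_zero_of_notMem_tsupport (fun h => hxK (Or.inr h))⟩
  intro s
  -- derivative of τ ↦ u τ x at t
  have hderiv : ∀ x t : ℝ, deriv (fun τ => u τ x) t =
      (deriv φ (x + t) + ψ (x + t)) / 2 - (deriv φ (x - t) - ψ (x - t)) / 2 := by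
    intro x t
    have h1 : HasDerivAt (fun τ : ℝ => F (x + τ))
        ((deriv φ (x + t) + ψ (x + t)) / 2 * 1) t :=
      (hFd (x + t)).comp t ((hasDerivAt_id t).const_add x)
    have h2 : HasDerivAt (fun τ : ℝ => G (x - τ))
        ((deriv φ (x - t) - ψ (x - t)) / 2 * (-1)) t :=
      (hGd (x - t)).comp t ((hasDerivAt_id t).const_sub x)
    have h3 : HasDerivAt (fun τ => u τ x)
        ((deriv φ (x + t) + ψ (x + t)) / 2 * 1 +
          (deriv φ (x - t) - ψ (x - t)) / 2 * (-1)) t := by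
      have := h1.add h2
      simpa only [hu, Pi.add_def] using this
    rw [h3.deriv]; ring
  constructor
  · constructor
    · have heq : ∀ᶠ r : ℝ in atTop,
          deriv (fun τ => u τ (-r)) (s + r) = deriv F s := by
        filter_upwards [eventually_ge_atTop (|s| + R + 1)] with r hr
        rw [hderiv, (hFd s).deriv]
        have hx1 : -r + (s + r) = s := by ring
        have hbig : R < |-r - (s + r)| := by
          have : |s| + R + 1 ≤ r := hr
          have h1 : -r - (s + r) = -(2 * r + s) := by ring
          rw [h1, abs_neg]
          have h2 : |s| + 2 * R + 2 ≤ 2 * r + s := by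
            have := abs_le.mp (le_refl |s|)
            have := neg_abs_le s
            linarith
          have : R < 2 * r + s := by
            have := abs_nonneg s
            linarith [hR0]
          calc R < 2 * r + s := this
            _ ≤ |2 * r + s| := le_abs_self _
        obtain ⟨hz1, hz2⟩ := hR _ hbig
        rw [hx1, hz1, hz2]
        ring
      exact Tendsto.congr' (heq.mono fun r h => h.symm) tendsto_const_nhds
    · exact (hFd s).deriv
  · constructor
    · have heq : ∀ᶠ r : ℝ in atTop,
          deriv (fun τ => u τ r) (s + r) = -deriv G (-s) := by
        filter_upwards [eventually_ge_atTop (|s| + R + 1)] with r hr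
        rw [hderiv, (hGd (-s)).deriv]
        have hx1 : r - (s + r) = -s := by ring
        have hbig : R < |r + (s + r)| := by
          have : |s| + R + 1 ≤ r := hr
          have h2 : R < 2 * r + s := by
            have := neg_abs_le s
            have := abs_nonneg s
            linarith [hR0]
          have h3 : r + (s + r) = 2 * r + s := by ring
          rw [h3]
          calc R < 2 * r + s := h2
            _ ≤ |2 * r + s| := le_abs_self _
        obtain ⟨hz1, hz2⟩ := hR _ hbig
        rw [hx1, hz1, hz2]
        ring
      exact Tendsto.congr' (heq.mono fun r h => h.symm) tendsto_const_nhds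
    · rw [(hGd (-s)).deriv]
end

section
/- Let R > 0 and let φ, ψ : ℝ → ℝ be smooth and supported in the interval [−R, R]. Let u(t,x) = F(x+t) + G(x−t) where F(σ) = φ(σ)/2 + (1/2)∫_0^σ ψ(r) dr and G(σ) = φ(σ)/2 − (1/2)∫_0^σ ψ(r) dr. Then for every t with |t| ≥ R, ∫_ℝ |(∂_t u)(t,x)|² dx = ∫_ℝ |(∂_x u)(t,x)|² dx. -/
open MeasureTheory intervalIntegral

/-- Finite-time exact equipartition of energy for the one-dimensional wave equation with
smooth initial data supported in `[-R, R]`: for `|t| ≥ R`, the kinetic and potential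
energies agree exactly. -/
theorem finite_time_equipartition_one_dim
    (R : ℝ) (hR : 0 < R)
    (φ ψ : ℝ → ℝ) (hφ : ContDiff ℝ (⊤ : ℕ∞) φ) (hψ : ContDiff ℝ (⊤ : ℕ∞) ψ)
    (hφsupp : tsupport φ ⊆ Set.Icc (-R) R) (hψsupp : tsupport ψ ⊆ Set.Icc (-R) R)
    (F G : ℝ → ℝ) (u : ℝ → ℝ → ℝ)
    (hF : ∀ σ : ℝ, F σ = φ σ / 2 + (1 / 2) * ∫ r in (0 : ℝ)..σ, ψ r)
    (hG : ∀ σ : ℝ, G σ = φ σ / 2 - (1 / 2) * ∫ r in (0 : ℝ)..σ, ψ r)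
    (hu : ∀ t x : ℝ, u t x = F (x + t) + G (x - t)) :
    ∀ t : ℝ, R ≤ |t| →
      (∫ x : ℝ, |deriv (fun τ => u τ x) t| ^ 2) = ∫ x : ℝ, |deriv (fun ξ => u t ξ) x| ^ 2 := by
  intro t ht
  set f : ℝ → ℝ := fun σ => deriv φ σ / 2 + ψ σ / 2 with hfdef
  set g : ℝ → ℝ := fun σ => deriv φ σ / 2 - ψ σ / 2 with hgdef
  have hφd : Differentiable ℝ φ := hφ.differentiable (by simp)
  -- derivatives of F and G
  have hFd : ∀ σ : ℝ, HasDerivAt F (f σ) σ := by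
    intro σ
    have h1 : HasDerivAt (fun s => φ s / 2) (deriv φ σ / 2) σ :=
      (hφd σ).hasDerivAt.div_const 2
    have h2 : HasDerivAt (fun s : ℝ => (1 / 2 : ℝ) * ∫ r in (0 : ℝ)..s, ψ r)
        ((1 / 2) * ψ σ) σ :=
      ((hψ.continuous.integral_hasStrictDerivAt 0 σ).hasDerivAt).const_mul (1 / 2)
    have h3 := h1.add h2
    have hFeq : F = fun s => φ s / 2 + (1 / 2) * ∫ r in (0 : ℝ)..s, ψ r := funext hF
    rw [hFeq]
    refine HasDerivAt.congr_deriv h3 ?_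
    show _ = deriv φ σ / 2 + ψ σ / 2; ring
  have hGd : ∀ σ : ℝ, HasDerivAt G (g σ) σ := by
    intro σ
    have h1 : HasDerivAt (fun s => φ s / 2) (deriv φ σ / 2) σ :=
      (hφd σ).hasDerivAt.div_const 2
    have h2 : HasDerivAt (fun s : ℝ => (1 / 2 : ℝ) * ∫ r in (0 : ℝ)..s, ψ r)
        ((1 / 2) * ψ σ) σ :=
      ((hψ.continuous.integral_hasStrictDerivAt 0 σ).hasDerivAt).const_mul (1 / 2)
    have h3 := h1.sub h2
    have hGeq : G = fun s => φ s / 2 - (1 / 2) * ∫ r in (0 : ℝ)..s, ψ r := funext hG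
    rw [hGeq]
    refine HasDerivAt.congr_deriv h3 ?_
    show _ = deriv φ σ / 2 - ψ σ / 2; ring
  -- vanishing outside [-R, R]
  have hφ0 : ∀ σ : ℝ, σ ∉ Set.Icc (-R) R → deriv φ σ = 0 := by
    intro σ hσ
    have hσ' : σ ∉ tsupport φ := fun h => hσ (hφsupp h)
    have hev : φ =ᶠ[nhds σ] (fun _ => 0) := by
      have : (tsupport φ)ᶜ ∈ nhds σ :=
        (isOpen_compl_iff.mpr (isClosed_tsupport φ)).mem_nhds hσ'
      filter_upwards [this] with y hy
      exact image_eq_zero_of_notMem_tsupport hy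
    rw [hev.deriv_eq]
    simp
  have hf0 : ∀ σ : ℝ, σ ∉ Set.Icc (-R) R → f σ = 0 := by
    intro σ hσ
    have hψ0 : ψ σ = 0 := image_eq_zero_of_notMem_tsupport (fun h => hσ (hψsupp h))
    simp [hfdef, hφ0 σ hσ, hψ0]
  have hg0 : ∀ σ : ℝ, σ ∉ Set.Icc (-R) R → g σ = 0 := by
    intro σ hσ
    have hψ0 : ψ σ = 0 := image_eq_zero_of_notMem_tsupport (fun h => hσ (hψsupp h))
    simp [hgdef, hφ0 σ hσ, hψ0]
  -- pointwise derivatives of u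
  have hdt : ∀ x : ℝ, deriv (fun τ => u τ x) t = f (x + t) - g (x - t) := by
    intro x
    have h1 : HasDerivAt (fun τ : ℝ => F (x + τ)) (f (x + t)) t := by
      have := (hFd (x + t)).comp t ((hasDerivAt_id t).const_add x)
      simpa [Function.comp_def] using this
    have h2 : HasDerivAt (fun τ : ℝ => G (x - τ)) (-g (x - t)) t := by
      have := (hGd (x - t)).comp t ((hasDerivAt_id t).const_sub x)
      simpa [Function.comp_def] using this
    have h3 : HasDerivAt (fun τ : ℝ => F (x + τ) + G (x - τ))
        (f (x + t) - g (x - t)) t := by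
      have := h1.add h2
      simpa [sub_eq_add_neg, Pi.add_def] using this
    have : (fun τ => u τ x) = fun τ : ℝ => F (x + τ) + G (x - τ) := by
      funext τ; exact hu τ x
    rw [this]
    exact h3.deriv
  have hdx : ∀ x : ℝ, deriv (fun ξ => u t ξ) x = f (x + t) + g (x - t) := by
    intro x
    have h1 : HasDerivAt (fun ξ : ℝ => F (ξ + t)) (f (x + t)) x := by
      have := (hFd (x + t)).comp x ((hasDerivAt_id x).add_const t)
      simpa [Function.comp_def] using this
    have h2 : HasDerivAt (fun ξ : ℝ => G (ξ - t)) (g (x - t)) x := by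
      have := (hGd (x - t)).comp x ((hasDerivAt_id x).sub_const t)
      simpa [Function.comp_def] using this
    have h3 := h1.add h2
    have : (fun ξ => u t ξ) = fun ξ : ℝ => F (ξ + t) + G (ξ - t) := by
      funext ξ; exact hu t ξ
    rw [this]
    exact h3.deriv
  -- product vanishes for x ≠ 0
  have hprod : ∀ x : ℝ, x ≠ 0 → f (x + t) * g (x - t) = 0 := by
    intro x hx
    by_cases hfx : f (x + t) = 0
    · rw [hfx, zero_mul]
    · have hmem : x + t ∈ Set.Icc (-R) R := by
        by_contra h; exact hfx (hf0 _ h)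
      have hg : g (x - t) = 0 := by
        apply hg0
        intro hmem2
        rcases abs_le.mp (le_refl |t|) with _
        rcases le_or_gt R t with h1 | h1
        · -- t ≥ R
          have hx1 : x + t ≤ R := hmem.2
          have hx2 : -R ≤ x - t := hmem2.1
          have : x = 0 := by linarith
          exact hx this
        · have h2 : t ≤ -R := by
            rcases abs_cases t with ⟨he, _⟩ | ⟨he, _⟩
            · linarith [ht, he ▸ ht]
            · linarith [ht]
          have hx1 : -R ≤ x + t := hmem.1
          have hx2 : x - t ≤ R := hmem2.2
          have : x = 0 := by linarith
          exact hx this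
      rw [hg, mul_zero]
  apply MeasureTheory.integral_congr_ae
  have h0 : ∀ᵐ x : ℝ, x ≠ 0 := by
    rw [ae_iff]
    have : {x : ℝ | ¬x ≠ 0} = {0} := by ext x; simp
    rw [this]
    exact Real.volume_singleton
  filter_upwards [h0] with x hx
  rw [hdt x, hdx x, sq_abs, sq_abs]
  have h := hprod x hx
  nlinarith [h]
end

section
/- Let φ : ℝ → ℝ be continuously differentiable with φ' ∈ L²(ℝ), let ψ ∈ L²(ℝ) be continuous, and let u(t,x) = F(x+t) + G(x−t) where F(σ) = φ(σ)/2 + (1/2)∫_0^σ ψ(r) dr and G(σ) = φ(σ)/2 − (1/2)∫_0^σ ψ(r) dr. Then lim_{t→∞} ( ∫_ℝ |(∂_t u)(t,x)|² dx − ∫_ℝ |(∂_x u)(t,x)|² dx ) = 0. -/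
/-!
By d'Alembert, with `f = F'` and `g = G'` we have `∂ₜu = f(x+t) - g(x-t)` and
`∂ₓu = f(x+t) + g(x-t)`, so the two energies differ by `-4 ∫ f(x+t) g(x-t) dx`, the correlation
of two `L²` profiles travelling in opposite directions. Translation acts on `L²` by isometries,
so the correlation `⟪v(· + s), w⟫` is continuous in `(v, w)` uniformly in `s`; it vanishes for
large `|s|` when `v` and `w` have compact support, and such functions are dense in `L²`.
-/

open MeasureTheory Filter Topology intervalIntegral
open scoped InnerProductSpace

theorem isClosed_setOf_tendsto_zero_of_norm_le {ι E F : Type*} [NormedAddCommGroup E]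
    [NormedSpace ℝ E] [NormedAddCommGroup F] [NormedSpace ℝ F] {l : Filter ι}
    (A : ι → E →L[ℝ] F) {C : ℝ} (hA : ∀ i, ‖A i‖ ≤ C) :
    IsClosed {x | Tendsto (fun i => A i x) l (𝓝 0)} :=
  Equicontinuous.isClosed_setOfPred_tendsto
    (((NormedSpace.equicontinuous_TFAE A).out 5 1).mp (show ∃ C, ∀ i, ‖A i‖ ≤ C from ⟨C, hA⟩))
    continuous_const

section InnerProduct

variable {E ι : Type*} [NormedAddCommGroup E] [InnerProductSpace ℝ E] {l : Filter ι}

theorem tendsto_inner_apply_zero_of_dense (T : ι → E →ₗᵢ[ℝ] E) {D : Set E} (hD : Dense D)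
    (h : ∀ f ∈ D, ∀ g ∈ D, Tendsto (fun i => ⟪T i f, g⟫_ℝ) l (𝓝 0)) (f g : E) :
    Tendsto (fun i => ⟪T i f, g⟫_ℝ) l (𝓝 0) := by
  have isClosed_left (g : E) : IsClosed {f | Tendsto (fun i => ⟪T i f, g⟫_ℝ) l (𝓝 0)} := by
    simpa [real_inner_comm] using isClosed_setOf_tendsto_zero_of_norm_le
      (fun i => (innerSL ℝ g).comp (T i).toContinuousLinearMap) (C := ‖g‖) fun i =>
        ContinuousLinearMap.opNorm_le_bound _ (norm_nonneg g) fun f => by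
          simpa using norm_inner_le_norm (𝕜 := ℝ) g (T i f)
  have isClosed_right (f : E) : IsClosed {g | Tendsto (fun i => ⟪T i f, g⟫_ℝ) l (𝓝 0)} := by
    simpa using isClosed_setOf_tendsto_zero_of_norm_le (l := l)
      (fun i => innerSL ℝ (T i f)) (C := ‖f‖) fun i => by simp
  have tendsto_of_mem (g : E) (hg : g ∈ D) (f : E) : Tendsto (fun i => ⟪T i f, g⟫_ℝ) l (𝓝 0) :=
    (isClosed_left g).closure_subset_iff.2 (fun f hf => h f hf g hg) (hD f)
  exact (isClosed_right f).closure_subset_iff.2 (fun g hg => tendsto_of_mem g hg f) (hD g)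

end InnerProduct

theorem HasCompactSupport.eventually_mul_comp_add_eq_zero {G M : Type*} [AddCommGroup G]
    [TopologicalSpace G] [IsTopologicalAddGroup G] [MulZeroClass M] {f g : G → M}
    (hf : HasCompactSupport f) (hg : HasCompactSupport g) :
    ∀ᶠ s in cocompact G, ∀ x, f (x + s) * g x = 0 := by
  filter_upwards [((hf.prod hg).image continuous_sub).compl_mem_cocompact] with s hs x
  by_contra h
  exact hs ⟨(x + s, x), ⟨subset_tsupport f (left_ne_zero_of_mul h),
    subset_tsupport g (right_ne_zero_of_mul h)⟩, add_sub_cancel_left x s⟩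

section Translation

variable {G : Type*} [AddGroup G] [MeasurableSpace G] [MeasurableAdd G] (μ : Measure G)
  [μ.IsAddRightInvariant]

noncomputable def translateL2 (s : G) : Lp ℝ 2 μ →ₗᵢ[ℝ] Lp ℝ 2 μ :=
  Lp.compMeasurePreservingₗᵢ ℝ (· + s) (measurePreserving_add_right μ s)

variable {μ}

theorem inner_translateL2_of_ae_eq {v w : Lp ℝ 2 μ} {f g : G → ℝ} (hv : v =ᵐ[μ] f)
    (hw : w =ᵐ[μ] g) (s : G) :
    ⟪translateL2 μ s v, w⟫_ℝ = ∫ x, f (x + s) * g x ∂μ := by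
  have hvs : v ∘ (· + s) =ᵐ[μ] f ∘ (· + s) :=
    (measurePreserving_add_right μ s).quasiMeasurePreserving.ae_eq_comp hv
  rw [L2.inner_def]
  refine integral_congr_ae ?_
  filter_upwards [Lp.coeFn_compMeasurePreserving v (measurePreserving_add_right μ s), hvs, hw]
    with x hx hvx hwx
  change ⟪Lp.compMeasurePreserving (· + s) (measurePreserving_add_right μ s) v x, w x⟫_ℝ = _
  rw [hx, hvx, hwx]
  exact Real.inner_apply _ _

end Translation

section HaarMeasure

variable {E : Type*} [NormedAddCommGroup E] [NormedSpace ℝ E] [FiniteDimensional ℝ E]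
  [MeasurableSpace E] [BorelSpace E] {μ : Measure E} [μ.IsAddHaarMeasure]

theorem tendsto_integral_mul_comp_add {f g : E → ℝ} (hf : MemLp f 2 μ) (hg : MemLp g 2 μ) :
    Tendsto (fun s => ∫ x, f (x + s) * g x ∂μ) (cocompact E) (𝓝 0) := by
  have hD := Lp.dense_hasCompactSupport_contDiff (F := ℝ) (μ := μ) (p := 2) ENNReal.ofNat_ne_top
  have h := tendsto_inner_apply_zero_of_dense (l := cocompact E) (translateL2 μ) hD ?_
    (hf.toLp f) (hg.toLp g)
  · simpa only [inner_translateL2_of_ae_eq hf.coeFn_toLp hg.coeFn_toLp] using h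
  · rintro v ⟨f₀, hv, hf₀, -⟩ w ⟨g₀, hw, hg₀, -⟩
    refine tendsto_const_nhds.congr' ?_
    filter_upwards [hf₀.eventually_mul_comp_add_eq_zero hg₀] with s hs
    simp [inner_translateL2_of_ae_eq hv hw, hs]

theorem tendsto_integral_mul_comp_add_comp_sub {f g : E → ℝ} (hf : MemLp f 2 μ)
    (hg : MemLp g 2 μ) :
    Tendsto (fun t => ∫ x, f (x + t) * g (x - t) ∂μ) (cocompact E) (𝓝 0) := by
  have shift (t : E) :
      ∫ x, f (x + t) * g (x - t) ∂μ = ∫ x, f (x + (2 : ℝ) • t) * g x ∂μ := by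
    rw [← integral_sub_right_eq_self (fun x => f (x + (2 : ℝ) • t) * g x) t]
    congr with x
    rw [two_smul, sub_add_add_cancel]
  simp only [shift]
  exact (tendsto_integral_mul_comp_add hf hg).comp
    (Homeomorph.smulOfNeZero (2 : ℝ) two_ne_zero).isClosedEmbedding.tendsto_cocompact

end HaarMeasure

theorem integral_sq_abs_sub_sub_integral_sq_abs_add {α : Type*} [MeasurableSpace α]
    {μ : Measure α} {f g : α → ℝ} (hf : MemLp f 2 μ) (hg : MemLp g 2 μ) :
    ∫ x, |f x - g x| ^ 2 ∂μ - ∫ x, |f x + g x| ^ 2 ∂μ = -4 * ∫ x, f x * g x ∂μ := by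
  have hsub : Integrable (fun x => (f x - g x) ^ 2) μ := (hf.sub hg).integrable_sq
  have hadd : Integrable (fun x => (f x + g x) ^ 2) μ := (hf.add hg).integrable_sq
  simp only [sq_abs]
  rw [← integral_sub hsub hadd, ← MeasureTheory.integral_const_mul]
  congr with x
  ring

theorem hasDerivAt_dAlembert_time {F G : ℝ → ℝ} {a b t x : ℝ} (hF : HasDerivAt F a (x + t))
    (hG : HasDerivAt G b (x - t)) :
    HasDerivAt (fun τ => F (x + τ) + G (x - τ)) (a - b) t :=
  ((hF.comp_const_add x t).add (hG.comp_const_sub x t)).congr_deriv (sub_eq_add_neg a b).symm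

theorem hasDerivAt_dAlembert_space {F G : ℝ → ℝ} {a b t x : ℝ} (hF : HasDerivAt F a (x + t))
    (hG : HasDerivAt G b (x - t)) :
    HasDerivAt (fun ξ => F (ξ + t) + G (ξ - t)) (a + b) x :=
  (hF.comp_add_const x t).add (hG.comp_sub_const x t)

/-- Asymptotic equipartition of energy for the one-dimensional wave equation with
finite-energy initial data `(φ, ψ) ∈ Ḣ¹ × L²`. -/
theorem asymptotic_equipartition_one_dim
    (φ ψ : ℝ → ℝ) (hφ : ContDiff ℝ 1 φ)
    (hφ' : MemLp (deriv φ) 2 (volume : Measure ℝ))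
    (hψ : MemLp ψ 2 (volume : Measure ℝ)) (hψc : Continuous ψ)
    (F G : ℝ → ℝ) (u : ℝ → ℝ → ℝ)
    (hF : ∀ σ : ℝ, F σ = φ σ / 2 + (1 / 2) * ∫ r in (0 : ℝ)..σ, ψ r)
    (hG : ∀ σ : ℝ, G σ = φ σ / 2 - (1 / 2) * ∫ r in (0 : ℝ)..σ, ψ r)
    (hu : ∀ t x : ℝ, u t x = F (x + t) + G (x - t)) :
    Tendsto
      (fun t : ℝ =>
        (∫ x : ℝ, |deriv (fun τ => u τ x) t| ^ 2) - ∫ x : ℝ, |deriv (fun ξ => u t ξ) x| ^ 2)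
      atTop (𝓝 0) := by
  set f : ℝ → ℝ := fun σ => deriv φ σ / 2 + 1 / 2 * ψ σ
  set g : ℝ → ℝ := fun σ => deriv φ σ / 2 - 1 / 2 * ψ σ
  -- `x / 2` unfolds to `x * 2⁻¹`
  have hf : MemLp f 2 volume := (hφ'.mul_const 2⁻¹).add (hψ.const_mul _)
  have hg : MemLp g 2 volume := (hφ'.mul_const 2⁻¹).sub (hψ.const_mul _)
  have hφd (σ : ℝ) : HasDerivAt φ (deriv φ σ) σ := (hφ.differentiable one_ne_zero σ).hasDerivAt
  have hΨd (σ : ℝ) : HasDerivAt (fun s => ∫ r in (0 : ℝ)..s, ψ r) (ψ σ) σ :=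
    (hψc.integral_hasStrictDerivAt 0 σ).hasDerivAt
  have hFd (σ : ℝ) : HasDerivAt F (f σ) σ :=
    funext hF ▸ ((hφd σ).div_const 2).add ((hΨd σ).const_mul _)
  have hGd (σ : ℝ) : HasDerivAt G (g σ) σ :=
    funext hG ▸ ((hφd σ).div_const 2).sub ((hΨd σ).const_mul _)
  have h := ((tendsto_integral_mul_comp_add_comp_sub hf hg).mono_left atTop_le_cocompact).const_mul
    (-4)
  rw [mul_zero] at h
  refine h.congr fun t => ?_
  simp only [hu, (hasDerivAt_dAlembert_time (hFd _) (hGd _)).deriv,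
    (hasDerivAt_dAlembert_space (hFd _) (hGd _)).deriv]
  exact (integral_sq_abs_sub_sub_integral_sq_abs_add
    (hf.comp_measurePreserving (measurePreserving_add_right volume t))
    (hg.comp_measurePreserving (measurePreserving_sub_right volume t))).symm
end
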